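/- Let μ be a (C,γ)-absolutely decaying measure on ℝⁿ with threshold ρ₀, let 0 < α < 1/(2C^{1/γ}+1), let 0 < ρ < ρ₀, let x₁ ∈ supp μ, and let L be an affine hyperplane in ℝⁿ. Then there exists x₂ ∈ supp μ with B(x₂, αρ) ⊆ B(x₁, ρ) and dist(B(x₂, αρ), L) > αρ; in particular B(x₂,αρ) is disjoint from L. -/

import Mathlib

open MeasureTheory Metric Set Filter RealInnerProductSpace

/-- The (topological) support of a measure on `ℝⁿ`. -/
def measSupport {n : ℕ} (μ : Measure (EuclideanSpace ℝ (Fin n))) :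
    Set (EuclideanSpace ℝ (Fin n)) :=
  {x | ∀ ρ : ℝ, 0 < ρ → 0 < μ (ball x ρ)}

/-- An affine hyperplane in `ℝⁿ`. -/
def IsAffineHyperplane {n : ℕ} (L : Set (EuclideanSpace ℝ (Fin n))) : Prop :=
  ∃ (u : EuclideanSpace ℝ (Fin n)) (b : ℝ), u ≠ 0 ∧ L = {x | ⟪u, x⟫ = b}

/-- `μ` is `(C,γ)`-absolutely decaying with threshold `ρ₀`. -/
def AbsolutelyDecaying {n : ℕ} (μ : Measure (EuclideanSpace ℝ (Fin n)))
    (C γ ρ₀ : ℝ) : Prop :=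
  ∀ L : Set (EuclideanSpace ℝ (Fin n)), IsAffineHyperplane L →
    ∀ x ∈ measSupport μ, ∀ ρ : ℝ, 0 < ρ → ρ < ρ₀ → ∀ ε : ℝ, 0 < ε →
      μ (closedBall x ρ ∩ cthickening ε L) <
        ENNReal.ofReal (C * (ε / ρ) ^ γ) * μ (closedBall x ρ)

/-!
Shrink the ball about `x₁` to radius `r = (1 - α) ρ` and thicken `L` by `2αρ`. The bound
on `α` is exactly what makes the decay factor `C (2αρ / r)^γ` smaller than `1`, so the thickened
hyperplane misses a part of `B(x₁, r)` of positive measure, and that part contains a point `x₂`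
of the support.
The ball `B(x₂, αρ)` then lies in `B(x₁, ρ)` and stays at distance more than `αρ` from `L`.
-/

section Support

variable {n : ℕ} (μ : Measure (EuclideanSpace ℝ (Fin n)))

lemma measure_compl_measSupport : μ (measSupport μ)ᶜ = 0 := by
  refine measure_null_of_locally_null _ fun x hx ↦ ?_
  simp only [measSupport, mem_compl_iff, mem_ofPred_eq, not_forall, not_lt,
    nonpos_iff_eq_zero] at hx
  obtain ⟨r, hr, hr0⟩ := hx
  exact ⟨ball x r, mem_nhdsWithin_of_mem_nhds (ball_mem_nhds x hr), hr0⟩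

variable {μ}

lemma exists_mem_measSupport_of_measure_inter_lt {s t : Set (EuclideanSpace ℝ (Fin n))}
    (h : μ (s ∩ t) < μ s) : ∃ x ∈ measSupport μ, x ∈ s ∧ x ∉ t := by
  by_contra! hst
  refine h.not_ge (calc
    μ s ≤ μ ((s ∩ t) ∪ (measSupport μ)ᶜ) := measure_mono fun x hx ↦ ?_
    _ ≤ μ (s ∩ t) + μ (measSupport μ)ᶜ := measure_union_le _ _
    _ = μ (s ∩ t) := by rw [measure_compl_measSupport, add_zero])
  by_cases hxμ : x ∈ measSupport μ
  · exact Or.inl ⟨hx, hst x hxμ hx⟩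
  · exact Or.inr hxμ

lemma AbsolutelyDecaying.exists_mem_measSupport_notMem_cthickening {C γ ρ₀ : ℝ}
    (hμ : AbsolutelyDecaying μ C γ ρ₀) {L : Set (EuclideanSpace ℝ (Fin n))}
    (hL : IsAffineHyperplane L) {x : EuclideanSpace ℝ (Fin n)} (hx : x ∈ measSupport μ)
    {r ε : ℝ} (hr : 0 < r) (hr₀ : r < ρ₀) (hε : 0 < ε) (hCε : C * (ε / r) ^ γ ≤ 1) :
    ∃ y ∈ measSupport μ, y ∈ closedBall x r ∧ y ∉ cthickening ε L := by
  refine exists_mem_measSupport_of_measure_inter_lt (calc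
    _ < ENNReal.ofReal (C * (ε / r) ^ γ) * μ (closedBall x r) := hμ L hL x hx r hr hr₀ ε hε
    _ ≤ μ (closedBall x r) := ?_)
  simpa using mul_le_mul_left (ENNReal.ofReal_le_one.mpr hCε) (μ (closedBall x r))

end Support

lemma closedBall_inter_cthickening_eq_empty {X : Type*} [PseudoMetricSpace X] {x : X}
    {s : Set X} {a b : ℝ} (ha : 0 ≤ a) (hb : 0 ≤ b) (hx : x ∉ cthickening (a + b) s) :
    closedBall x a ∩ cthickening b s = ∅ := by
  refine eq_empty_iff_forall_notMem.mpr fun y ⟨hya, hyb⟩ ↦ hx ?_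
  refine cthickening_cthickening_subset ha hb s (closedBall_subset_cthickening hyb a ?_)
  rwa [mem_closedBall_comm]

lemma decay_factor_lt_one {C γ α : ℝ} (hC : 0 < C) (hγ : 0 < γ) (hα : 0 < α)
    (hα' : α < 1 / (2 * C ^ (1 / γ) + 1)) : C * (2 * α / (1 - α)) ^ γ < 1 := by
  set D := C ^ (1 / γ)
  have hD : 0 < D := Real.rpow_pos_of_pos hC _
  have hαD : α * (2 * D + 1) < 1 := (lt_div_iff₀ (by positivity)).mp hα'
  have hlt : 2 * α / (1 - α) < D⁻¹ := by
    rw [div_lt_iff₀ (by nlinarith), inv_mul_eq_div, lt_div_iff₀ hD]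
    nlinarith
  have hDγ : D⁻¹ ^ γ = C⁻¹ := by
    rw [Real.inv_rpow hD.le, ← Real.rpow_mul hC.le, one_div_mul_cancel hγ.ne', Real.rpow_one]
  calc C * (2 * α / (1 - α)) ^ γ < C * D⁻¹ ^ γ := by
        gcongr
        exact div_nonneg (by positivity) (by nlinarith)
    _ = 1 := by rw [hDγ, mul_inv_cancel₀ hC.ne']

theorem escape_one_hyperplane_general {n : ℕ}
    (μ : Measure (EuclideanSpace ℝ (Fin n)))
    (C γ ρ₀ : ℝ) (hC : 0 < C) (hγ : 0 < γ)
    (hμ : AbsolutelyDecaying μ C γ ρ₀)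
    (α : ℝ) (hα : 0 < α) (hα' : α < 1 / (2 * C ^ (1/γ) + 1))
    (ρ : ℝ) (hρ : 0 < ρ) (hρ' : ρ < ρ₀)
    (x₁ : EuclideanSpace ℝ (Fin n)) (hx₁ : x₁ ∈ measSupport μ)
    (L : Set (EuclideanSpace ℝ (Fin n))) (hL : IsAffineHyperplane L) :
    ∃ x₂ ∈ measSupport μ,
      closedBall x₂ (α * ρ) ⊆ closedBall x₁ ρ ∧
      closedBall x₂ (α * ρ) ∩ cthickening (α * ρ) L = ∅ ∧
      closedBall x₂ (α * ρ) ∩ L = ∅ := by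
  have hα1 : α < 1 := hα'.trans_le <| div_le_one_of_le₀
    (by linarith [Real.rpow_pos_of_pos hC (1 / γ)]) (by positivity)
  have hratio : 2 * α * ρ / ((1 - α) * ρ) = 2 * α / (1 - α) := mul_div_mul_right _ _ hρ.ne'
  obtain ⟨x₂, hx₂, hx₂x₁, hx₂L⟩ :=
    hμ.exists_mem_measSupport_notMem_cthickening hL hx₁ (r := (1 - α) * ρ) (ε := 2 * α * ρ)
      (by nlinarith) (by nlinarith) (by positivity)
      (by rw [hratio]; exact (decay_factor_lt_one hC hγ hα hα').le)
  have hdisj : closedBall x₂ (α * ρ) ∩ cthickening (α * ρ) L = ∅ :=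
    closedBall_inter_cthickening_eq_empty (by positivity) (by positivity)
      (by rwa [← two_mul, ← mul_assoc])
  refine ⟨x₂, hx₂, closedBall_subset_closedBall' ?_, hdisj,
    subset_eq_empty (inter_subset_inter_right _ (self_subset_cthickening L)) hdisj⟩
  linarith [mem_closedBall.mp hx₂x₁]

/-- escaping one hyperplane. -/
theorem escape_one_hyperplane {n : ℕ}
    (μ : Measure (EuclideanSpace ℝ (Fin n))) [IsLocallyFiniteMeasure μ]
    (C γ ρ₀ : ℝ) (hC : 0 < C) (hγ : 0 < γ) (hρ₀ : 0 < ρ₀)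
    (hμ : AbsolutelyDecaying μ C γ ρ₀)
    (α : ℝ) (hα : 0 < α) (hα' : α < 1 / (2 * C ^ (1/γ) + 1))
    (ρ : ℝ) (hρ : 0 < ρ) (hρ' : ρ < ρ₀)
    (x₁ : EuclideanSpace ℝ (Fin n)) (hx₁ : x₁ ∈ measSupport μ)
    (L : Set (EuclideanSpace ℝ (Fin n))) (hL : IsAffineHyperplane L) :
    ∃ x₂ ∈ measSupport μ,
      closedBall x₂ (α * ρ) ⊆ closedBall x₁ ρ ∧
      closedBall x₂ (α * ρ) ∩ cthickening (α * ρ) L = ∅ ∧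
      closedBall x₂ (α * ρ) ∩ L = ∅ :=
  escape_one_hyperplane_general μ C γ ρ₀ hC hγ hμ α hα hα' ρ hρ hρ' x₁ hx₁ L hL
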